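/- Let p = (p0,p1,p2) ∈ [0,1)³ satisfy κ_△(p) = 0, and consider the triangle graph G on {A,B,C} (edges BC, CA, AB open independently with probabilities p0, p1, p2) and the star graph G' on {A,B,C,O} (edges OA, OB, OC open independently with probabilities 1−p0, 1−p1, 1−p2). Then there exists a coupling of the two percolation measures, i.e., a probability measure μ on {0,1}^{E(G)} × {0,1}^{E(G')} whose first marginal is the triangle product measure and whose second marginal is the star product measure, such that μ-almost surely, for all x, y ∈ {A,B,C}, x ↔ y in the first (triangle) configuration if and only if x ↔ y in the second (star) configuration. -/

import Mathlib

open MeasureTheory Set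

set_option linter.unusedVariables false

namespace Perc

/-- Points of the plane. -/
abbrev Pt := ℝ × ℝ

/-- A lattice embedded in the plane, with edges indexed by `E`;
each edge is embedded as the segment between the two endpoints given by `ends`. -/
structure LatticeOn (E : Type) where
  ends : E → Pt × Pt

/-- Bond configurations. -/
abbrev Config (E : Type) := E → Bool

/-- `P` is the Bernoulli bond-percolation product measure in which edge `e`
is open with probability `p e`, independently over edges. -/
def IsBernoulliProduct {E : Type} (p : E → ℝ) (P : Measure (Config E)) : Prop :=
  IsProbabilityMeasure P ∧
    ∀ (s : Finset E) (f : E → Bool),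
      P {ω | ∀ e ∈ s, ω e = f e} =
        ∏ e ∈ s, ENNReal.ofReal (if f e then p e else 1 - p e)

/-- The union of the closed segments of the open edges. -/
def openEdgeSet {E : Type} (L : LatticeOn E) (ω : Config E) : Set Pt :=
  ⋃ e ∈ {e : E | ω e = true}, segment ℝ (L.ends e).1 (L.ends e).2

/-- There is an arc, contained in `S` and in the union of the open edges,
with one endpoint in `A` and the other in `B`. -/
def CrossingIn {E : Type} (L : LatticeOn E) (ω : Config E) (S A B : Set Pt) : Prop :=
  ∃ γ : ℝ → Pt, ContinuousOn γ (Icc 0 1) ∧ γ 0 ∈ A ∧ γ 1 ∈ B ∧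
    ∀ t ∈ Icc (0:ℝ) 1, γ t ∈ S ∩ openEdgeSet L ω

/-- Rotation of the plane by angle `θ`. -/
noncomputable def rot (θ : ℝ) (z : Pt) : Pt :=
  (Real.cos θ * z.1 - Real.sin θ * z.2, Real.sin θ * z.1 + Real.cos θ * z.2)

/-- `f` comprises a rotation and a translation. -/
def IsRotTrans (f : Pt → Pt) : Prop := ∃ θ : ℝ, ∃ t : Pt, f = fun z => rot θ z + t

def stdRect (h l : ℝ) : Set Pt := {z | 0 ≤ z.1 ∧ z.1 ≤ h ∧ 0 ≤ z.2 ∧ z.2 ≤ l}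
def leftSide (h l : ℝ) : Set Pt := {z | z.1 = 0 ∧ 0 ≤ z.2 ∧ z.2 ≤ l}
def rightSide (h l : ℝ) : Set Pt := {z | z.1 = h ∧ 0 ≤ z.2 ∧ z.2 ≤ l}
def bottomSide (h l : ℝ) : Set Pt := {z | z.2 = 0 ∧ 0 ≤ z.1 ∧ z.1 ≤ h}
def topSide (h l : ℝ) : Set Pt := {z | z.2 = l ∧ 0 ≤ z.1 ∧ z.1 ≤ h}

/-- The box `f(stdRect h l)` (where `f` is a rotation plus translation) possesses
open crossings in both directions. -/
def HasBoxCrossings {E : Type} (L : LatticeOn E) (ω : Config E) (h l : ℝ) (f : Pt → Pt) : Prop :=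
  CrossingIn L ω (f '' stdRect h l) (f '' leftSide h l) (f '' rightSide h l) ∧
  CrossingIn L ω (f '' stdRect h l) (f '' bottomSide h l) (f '' topSide h l)

/-- The box-crossing property: for every `α > 0` there is `δ > 0` such that every box
of size `αN × N` (any position and orientation) possesses open crossings with
probability at least `δ`, for all large `N`. -/
def BoxCrossingProperty {E : Type} (L : LatticeOn E) (P : Measure (Config E)) : Prop :=
  ∀ α : ℝ, 0 < α → ∃ δ : ℝ, 0 < δ ∧ ∃ N₀ : ℕ, ∀ N : ℕ, N₀ ≤ N →
    ∀ f : Pt → Pt, IsRotTrans f →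
      ENNReal.ofReal δ ≤ P {ω | HasBoxCrossings L ω (α * N) N f}

/-- Horizontal-crossing event of the box `[-m,m] × [0,n]`. -/
def Ch {E : Type} (L : LatticeOn E) (m n : ℝ) (ω : Config E) : Prop :=
  CrossingIn L ω {z | -m ≤ z.1 ∧ z.1 ≤ m ∧ 0 ≤ z.2 ∧ z.2 ≤ n}
    {z | z.1 = -m ∧ 0 ≤ z.2 ∧ z.2 ≤ n} {z | z.1 = m ∧ 0 ≤ z.2 ∧ z.2 ≤ n}

/-- Vertical-crossing event of the box `[-m,m] × [0,n]`. -/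
def Cv {E : Type} (L : LatticeOn E) (m n : ℝ) (ω : Config E) : Prop :=
  CrossingIn L ω {z | -m ≤ z.1 ∧ z.1 ≤ m ∧ 0 ≤ z.2 ∧ z.2 ≤ n}
    {z | z.2 = 0 ∧ -m ≤ z.1 ∧ z.1 ≤ m} {z | z.2 = n ∧ -m ≤ z.1 ∧ z.1 ≤ m}

/-- `u` and `v` are the endpoints of some open edge. -/
def openAdj {E : Type} (L : LatticeOn E) (ω : Config E) (u v : Pt) : Prop :=
  ∃ e, ω e = true ∧ (L.ends e = (u, v) ∨ L.ends e = (v, u))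

/-- `u` and `v` are joined by a path of open edges. -/
def openConn {E : Type} (L : LatticeOn E) (ω : Config E) : Pt → Pt → Prop :=
  Relation.ReflTransGen (openAdj L ω)

/-- The open cluster at `v`. -/
def cluster {E : Type} (L : LatticeOn E) (ω : Config E) (v : Pt) : Set Pt :=
  {u | openConn L ω v u}

/-- The vertex set of the lattice. -/
def vertexSet {E : Type} (L : LatticeOn E) : Set Pt :=
  ⋃ e : E, {(L.ends e).1, (L.ends e).2}

/-- `v` is the endpoint of an infinite open self-avoiding path. -/
def ConnToInfinity {E : Type} (L : LatticeOn E) (ω : Config E) (v : Pt) : Prop :=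
  ∃ γ : ℕ → Pt, γ 0 = v ∧ Function.Injective γ ∧ ∀ n, openAdj L ω (γ n) (γ (n + 1))

/-- Euclidean distance on the plane. -/
noncomputable def edist2 (u v : Pt) : ℝ := Real.sqrt ((u.1 - v.1) ^ 2 + (u.2 - v.2) ^ 2)

/-- `rad (C_v) ≥ r`, where `rad (C_v)` is the supremum of all `x` such that `C_v`
meets the complement of the open Euclidean ball `v + S_x`. -/
def RadiusGE {E : Type} (L : LatticeOn E) (ω : Config E) (v : Pt) (r : ℝ) : Prop :=
  ∀ x : ℝ, x < r → ∃ u ∈ cluster L ω v, x ≤ edist2 v u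

/-- `κ_□`. -/
def kappaS (a b : ℝ) : ℝ := a + b - 1
/-- `κ_△`. -/
def kappaT (a b c : ℝ) : ℝ := a + b + c - a * b * c - 1
/-- `κ_⬡`. -/
def kappaH (a b c : ℝ) : ℝ := -kappaT (1 - a) (1 - b) (1 - c)

/-- Edges of a square-type lattice: `(a, b, true)` is the `horizontal`-class edge
at `(a,b)` and `(a, b, false)` the `vertical`-class edge at `(a,b)`. -/
abbrev SqE := ℤ × ℤ × Bool
/-- Edges of the triangular lattice (also indexing the dual hexagonal edges):
`(a, b, i)` with `i = 0` horizontal, `i = 1` the right edge of an upwards pointing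
triangle, `i = 2` the left edge of an upwards pointing triangle, in row `b`. -/
abbrev TriE := ℤ × ℤ × Fin 3

/-- The unit square lattice, with vertex set `ℤ²`. -/
noncomputable def sqLattice : LatticeOn SqE :=
  ⟨fun e =>
    if e.2.2 then (((e.1 : ℝ), (e.2.1 : ℝ)), ((e.1 : ℝ) + 1, (e.2.1 : ℝ)))
    else (((e.1 : ℝ), (e.2.1 : ℝ)), ((e.1 : ℝ), (e.2.1 : ℝ) + 1))⟩

/-- The dual of the unit square lattice (shifted by `(1/2, 1/2)`), with each dual edge
indexed by the primal edge it crosses. -/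
noncomputable def sqDualLattice : LatticeOn SqE :=
  ⟨fun e =>
    if e.2.2 then
      (((e.1 : ℝ) + 1 / 2, (e.2.1 : ℝ) - 1 / 2), ((e.1 : ℝ) + 1 / 2, (e.2.1 : ℝ) + 1 / 2))
    else
      (((e.1 : ℝ) - 1 / 2, (e.2.1 : ℝ) + 1 / 2), ((e.1 : ℝ) + 1 / 2, (e.2.1 : ℝ) + 1 / 2))⟩

/-- Vertices of the triangular lattice (equilateral triangles of side `√3`,
one family of edges horizontal). -/
noncomputable def tv (a b : ℤ) : Pt :=
  (Real.sqrt 3 * ((a : ℝ) + (b : ℝ) / 2), 3 / 2 * (b : ℝ))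

/-- The triangular lattice. -/
noncomputable def triLattice : LatticeOn TriE :=
  ⟨fun e =>
    if e.2.2 = 0 then (tv e.1 e.2.1, tv (e.1 + 1) e.2.1)
    else if e.2.2 = 1 then (tv (e.1 + 1) e.2.1, tv e.1 (e.2.1 + 1))
    else (tv e.1 e.2.1, tv e.1 (e.2.1 + 1))⟩

/-- Circumcentre of the upwards pointing triangle with base vertex `tv a b`. -/
noncomputable def hup (a b : ℤ) : Pt :=
  (Real.sqrt 3 * ((a : ℝ) + ((b : ℝ) + 1) / 2), 3 / 2 * (b : ℝ) + 1 / 2)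

/-- Circumcentre of the downwards pointing triangle below the edge `tv a b – tv (a+1) b`. -/
noncomputable def hdown (a b : ℤ) : Pt :=
  (Real.sqrt 3 * ((a : ℝ) + ((b : ℝ) + 1) / 2), 3 / 2 * (b : ℝ) - 1 / 2)

/-- The hexagonal lattice, the planar dual of `triLattice`, with vertices at the
circumcentres of the triangles; each hexagonal edge is indexed by the triangular
edge it crosses. -/
noncomputable def hexLattice : LatticeOn TriE :=
  ⟨fun e =>
    if e.2.2 = 0 then (hdown e.1 e.2.1, hup e.1 e.2.1)
    else if e.2.2 = 1 then (hup e.1 e.2.1, hdown e.1 (e.2.1 + 1))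
    else (hup e.1 e.2.1, hdown (e.1 - 1) (e.2.1 + 1))⟩

/-- The square lattice with horizontal edges of length `√3` and vertical edges of
length `1` (as in the mixed lattices). -/
noncomputable def sqStretch : LatticeOn SqE :=
  ⟨fun e =>
    if e.2.2 then
      ((Real.sqrt 3 * (e.1 : ℝ), (e.2.1 : ℝ)), (Real.sqrt 3 * ((e.1 : ℝ) + 1), (e.2.1 : ℝ)))
    else ((Real.sqrt 3 * (e.1 : ℝ), (e.2.1 : ℝ)), (Real.sqrt 3 * (e.1 : ℝ), (e.2.1 : ℝ) + 1))⟩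

/-- Vertices of the square lattice rotated by `π/4`. -/
noncomputable def rv (a b : ℤ) : Pt :=
  (((a : ℝ) - (b : ℝ)) / Real.sqrt 2, ((a : ℝ) + (b : ℝ)) / Real.sqrt 2)

/-- The square lattice rotated by `π/4`: edges `(a,b,true)` are inclined at angle `π/4`
and edges `(a,b,false)` at angle `3π/4`; the row (height) of such an edge is `a + b`. -/
noncomputable def rsqLattice : LatticeOn SqE :=
  ⟨fun e =>
    if e.2.2 then (rv e.1 e.2.1, rv (e.1 + 1) e.2.1)
    else (rv e.1 e.2.1, rv e.1 (e.2.1 + 1))⟩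

/-- Inhomogeneous intensities on the square lattice: `ph` on horizontal edges,
`pv` on vertical ones. -/
def sqInt (ph pv : ℝ) : SqE → ℝ := fun e => if e.2.2 then ph else pv

/-- Inhomogeneous intensities on the triangular (or hexagonal) lattice:
`p0` on class-0 edges, `p1` on class-1, `p2` on class-2. -/
def triInt (p0 p1 p2 : ℝ) : TriE → ℝ := fun e => ![p0, p1, p2] e.2.2

/-- Highly inhomogeneous intensities on the triangular (or hexagonal) lattice:
`p` on horizontal-class edges, `q n` on right edges of upwards pointing triangles at
height `n`, `q' n` on left edges of upwards pointing triangles at height `n`. -/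
def triHI (p : ℝ) (q q' : ℤ → ℝ) : TriE → ℝ := fun e =>
  if e.2.2 = 0 then p else if e.2.2 = 1 then q e.2.1 else q' e.2.1

/-- Highly inhomogeneous intensities on the rotated square lattice: `q n` on edges
inclined at `π/4` at height `n`, `q' n` on edges inclined at `3π/4` at height `n`. -/
def rsqHI (q q' : ℤ → ℝ) : SqE → ℝ := fun e =>
  if e.2.2 then q (e.1 + e.2.1) else q' (e.1 + e.2.1)


/-! Star–triangle transformation: the triangle graph `G` on `{A,B,C}` (vertices
`0,1,2 : Fin 3`) has edges indexed by `Fin 3`: edge `0 = BC`, `1 = CA`, `2 = AB`;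
edge `i` joins the two vertices distinct from `i`, i.e. vertices `u ≠ v` are joined
by edge `-(u+v)`.  The star graph `G'` on `{A,B,C,O}` (vertices `0,1,2,3 : Fin 4`,
with `O = 3`) has edges indexed by `Fin 3`: edge `i` is `O–i`. -/

/-- Connectivity in the triangle graph with configuration `ω`. -/
def triangleConn (ω : Fin 3 → Bool) : Fin 3 → Fin 3 → Prop :=
  Relation.ReflTransGen (fun u v => u ≠ v ∧ ω (-(u + v)) = true)

/-- Adjacency in the star graph with configuration `ω`: vertex `i < 3` is adjacent
to the centre `O = 3` when the spoke `O–i` is open. -/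
def starAdj (ω : Fin 3 → Bool) (u v : Fin 4) : Prop :=
  ∃ i : Fin 3, ω i = true ∧
    ((u = Fin.castSucc i ∧ v = 3) ∨ (u = 3 ∧ v = Fin.castSucc i))

/-- Connectivity in the star graph with configuration `ω`. -/
def starConn (ω : Fin 3 → Bool) : Fin 4 → Fin 4 → Prop :=
  Relation.ReflTransGen (starAdj ω)

/-- Probability of the configuration `ω` under independent edges with
intensities `p`. -/
def configWeight (p : Fin 3 → ℝ) (ω : Fin 3 → Bool) : ℝ :=
  ∏ i : Fin 3, if ω i then p i else 1 - p i

/-- The Bernoulli product measure on configurations of three edges with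
intensities `p`. -/
noncomputable def threeEdgeMeasure (p : Fin 3 → ℝ) : Measure (Fin 3 → Bool) :=
  ∑ ω : Fin 3 → Bool, ENNReal.ofReal (configWeight p ω) • Measure.dirac ω

/-! In both graphs the connectivity pattern of `{A, B, C}` is one of: nothing connected, only the
pair opposite to vertex `i` connected, or everything connected. The pattern has the same law under
the triangle and the star measure precisely because `κ_△(p) = 0`. Whenever `g(X)` and `h(Y)` have
the same law on finite spaces, `X` and `Y` can be coupled so that `g(X) = h(Y)` surely: take them
conditionally independent given the common value. Applied to the two patterns, this coupling makes
the two connectivity relations agree surely. -/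

open scoped ENNReal

section DiracSum

variable {α β : Type*} [Fintype α] [MeasurableSpace α]

theorem map_sum_smul_dirac [MeasurableSpace β] {f : α → β} (hf : Measurable f) (c : α → ℝ≥0∞) :
    (∑ a, c a • Measure.dirac a).map f = ∑ a, c a • Measure.dirac (f a) := by
  simp only [Measure.map_finset_sum' hf.aemeasurable, Measure.map_smul, Measure.map_dirac' hf]

theorem sum_smul_dirac_apply_eq_zero [MeasurableSingletonClass α] {c : α → ℝ≥0∞} {s : Set α}
    (hs : ∀ a ∈ s, c a = 0) : (∑ a, c a • Measure.dirac a) s = 0 := by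
  simp only [Measure.coe_finsetSum, Finset.sum_apply, Measure.smul_apply, smul_eq_mul,
    Measure.dirac_apply]
  refine Finset.sum_eq_zero fun a _ => ?_
  by_cases ha : a ∈ s
  · rw [hs a ha, zero_mul]
  · rw [Set.indicator_of_notMem ha, mul_zero]

theorem map_fst_sum_ofReal_smul_dirac [Fintype β] [MeasurableSpace β] {w : α × β → ℝ}
    (hw : 0 ≤ w) :
    (∑ σ, ENNReal.ofReal (w σ) • Measure.dirac σ).map Prod.fst =
      ∑ a, ENNReal.ofReal (∑ b, w (a, b)) • Measure.dirac a := by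
  rw [map_sum_smul_dirac measurable_fst, Fintype.sum_prod_type]
  simp only [← Finset.sum_smul, ENNReal.ofReal_sum_of_nonneg fun b _ => hw (_, b)]

theorem map_snd_sum_ofReal_smul_dirac [Fintype β] [MeasurableSpace β] {w : α × β → ℝ}
    (hw : 0 ≤ w) :
    (∑ σ, ENNReal.ofReal (w σ) • Measure.dirac σ).map Prod.snd =
      ∑ b, ENNReal.ofReal (∑ a, w (a, b)) • Measure.dirac b := by
  rw [map_sum_smul_dirac measurable_snd, Fintype.sum_prod_type_right]
  simp only [← Finset.sum_smul, ENNReal.ofReal_sum_of_nonneg fun a _ => hw (a, _)]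

end DiracSum

section Gluing

variable {α β γ : Type*} [Fintype α] [DecidableEq γ]

noncomputable def fiberMass (w : α → ℝ) (g : α → γ) (c : γ) : ℝ := ∑ a with g a = c, w a

theorem fiberMass_eq_of_law [Fintype β] {wa : α → ℝ} {wb : β → ℝ} {g : α → γ} {h : β → γ}
    (hlaw : ∀ φ : γ → ℝ, ∑ a, wa a * φ (g a) = ∑ b, wb b * φ (h b)) (c : γ) :
    fiberMass wa g c = fiberMass wb h c := by
  simpa [fiberMass, Finset.sum_filter] using hlaw fun x => if x = c then 1 else 0

theorem mul_fiberMass_div_fiberMass {w : α → ℝ} (hw : 0 ≤ w) (g : α → γ) (a : α) :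
    w a * fiberMass w g (g a) / fiberMass w g (g a) = w a := by
  by_cases hm : fiberMass w g (g a) = 0
  · have : w a ≤ fiberMass w g (g a) :=
      Finset.single_le_sum (fun b _ => hw b) (Finset.mem_filter.2 ⟨Finset.mem_univ a, rfl⟩)
    rw [hm] at this
    rw [hm, div_zero, le_antisymm this (hw a)]
  · exact mul_div_cancel_right₀ _ hm

noncomputable def glueWeight (wa : α → ℝ) (wb : β → ℝ) (g : α → γ) (h : β → γ) (σ : α × β) : ℝ :=
  if g σ.1 = h σ.2 then wa σ.1 * wb σ.2 / fiberMass wa g (g σ.1) else 0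

variable {wa : α → ℝ} {wb : β → ℝ} {g : α → γ} {h : β → γ}

theorem glueWeight_nonneg (hwa : 0 ≤ wa) (hwb : 0 ≤ wb) : 0 ≤ glueWeight wa wb g h := by
  intro σ
  unfold glueWeight
  split_ifs
  · exact div_nonneg (mul_nonneg (hwa _) (hwb _)) (Finset.sum_nonneg fun a _ => hwa a)
  · exact le_rfl

theorem glueWeight_eq_zero {σ : α × β} (hσ : g σ.1 ≠ h σ.2) : glueWeight wa wb g h σ = 0 :=
  if_neg hσ

theorem sum_glueWeight_left [Fintype β] (hwa : 0 ≤ wa)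
    (hlaw : ∀ φ : γ → ℝ, ∑ a, wa a * φ (g a) = ∑ b, wb b * φ (h b)) (a : α) :
    ∑ b, glueWeight wa wb g h (a, b) = wa a := by
  calc ∑ b, glueWeight wa wb g h (a, b)
      = ∑ b with h b = g a, wa a * wb b / fiberMass wa g (g a) := by
        rw [Finset.sum_filter]
        simp only [glueWeight, eq_comm]
    _ = wa a * fiberMass wb h (g a) / fiberMass wa g (g a) := by
        rw [← Finset.sum_div, ← Finset.mul_sum]; rfl
    _ = wa a := by rw [← fiberMass_eq_of_law hlaw, mul_fiberMass_div_fiberMass hwa]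

theorem sum_glueWeight_right [Fintype β] (hwb : 0 ≤ wb)
    (hlaw : ∀ φ : γ → ℝ, ∑ a, wa a * φ (g a) = ∑ b, wb b * φ (h b)) (b : β) :
    ∑ a, glueWeight wa wb g h (a, b) = wb b := by
  calc ∑ a, glueWeight wa wb g h (a, b)
      = ∑ a with g a = h b, wb b * wa a / fiberMass wb h (h b) := by
        rw [Finset.sum_filter]
        refine Finset.sum_congr rfl fun a _ => ?_
        unfold glueWeight
        split_ifs with hab
        · rw [hab, fiberMass_eq_of_law hlaw, mul_comm]
        · rfl
    _ = wb b * fiberMass wa g (h b) / fiberMass wb h (h b) := by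
        rw [← Finset.sum_div, ← Finset.mul_sum]; rfl
    _ = wb b := by rw [fiberMass_eq_of_law hlaw, mul_fiberMass_div_fiberMass hwb]

end Gluing

theorem exists_coupling_of_law_eq {α β γ : Type*} [Fintype α] [Fintype β]
    [MeasurableSpace α] [MeasurableSpace β] [MeasurableSingletonClass α]
    [MeasurableSingletonClass β] {wa : α → ℝ} {wb : β → ℝ} (hwa : 0 ≤ wa) (hwb : 0 ≤ wb)
    (hsum : ∑ a, wa a = 1) {g : α → γ} {h : β → γ}
    (hlaw : ∀ φ : γ → ℝ, ∑ a, wa a * φ (g a) = ∑ b, wb b * φ (h b)) :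
    ∃ μ : Measure (α × β), IsProbabilityMeasure μ ∧
      μ.map Prod.fst = ∑ a, ENNReal.ofReal (wa a) • Measure.dirac a ∧
      μ.map Prod.snd = ∑ b, ENNReal.ofReal (wb b) • Measure.dirac b ∧
      μ {σ | g σ.1 = h σ.2} = 1 := by
  classical
  have hw : 0 ≤ glueWeight wa wb g h := glueWeight_nonneg hwa hwb
  set μ := ∑ σ, ENNReal.ofReal (glueWeight wa wb g h σ) • Measure.dirac σ
  have hfst : μ.map Prod.fst = ∑ a, ENNReal.ofReal (wa a) • Measure.dirac a := by
    simp only [μ, map_fst_sum_ofReal_smul_dirac hw, sum_glueWeight_left hwa hlaw]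
  have hμ : IsProbabilityMeasure μ := by
    refine ⟨?_⟩
    rw [← Set.preimage_univ (f := Prod.fst), ← Measure.map_apply measurable_fst MeasurableSet.univ,
      hfst]
    simp [← ENNReal.ofReal_sum_of_nonneg fun a _ => hwa a, hsum]
  refine ⟨μ, hμ, hfst, ?_, ?_⟩
  · simp only [μ, map_snd_sum_ofReal_smul_dirac hw, sum_glueWeight_right hwb hlaw]
  · rw [← prob_compl_eq_zero_iff (Set.toFinite _).measurableSet]
    refine sum_smul_dirac_apply_eq_zero fun σ hσ => ?_
    rw [glueWeight_eq_zero hσ, ENNReal.ofReal_zero]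

theorem configWeight_nonneg {p : Fin 3 → ℝ} (hp : ∀ i, p i ∈ Icc 0 1) : 0 ≤ configWeight p :=
  fun ω => Finset.prod_nonneg fun i _ => by
    cases ω i
    · exact sub_nonneg.2 (hp i).2
    · exact (hp i).1

theorem sum_configWeight (p : Fin 3 → ℝ) : ∑ ω, configWeight p ω = 1 := by
  simpa [configWeight] using (Fintype.prod_sum fun i (b : Bool) => if b then p i else 1 - p i).symm

theorem sum_fin_succ_pi {β M : Type*} [Fintype β] [AddCommMonoid M] {n : ℕ}
    (f : (Fin (n + 1) → β) → M) :
    ∑ x, f x = ∑ a, ∑ v : Fin n → β, f (Matrix.vecCons a v) := by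
  rw [← Fintype.sum_prod_type']
  exact (Fintype.sum_equiv (Fin.consEquiv fun _ => β) _ _ fun _ => rfl).symm

-- Entry `i` records whether the two vertices other than `i` are connected.
def triangleLinks (ω : Fin 3 → Bool) : Fin 3 → Bool :=
  ![ω 0 || ω 1 && ω 2, ω 1 || ω 2 && ω 0, ω 2 || ω 0 && ω 1]

def starLinks (ω : Fin 3 → Bool) : Fin 3 → Bool :=
  ![ω 1 && ω 2, ω 2 && ω 0, ω 0 && ω 1]

theorem sum_configWeight_triangleLinks_eq_starLinks {p0 p1 p2 : ℝ} (hκ : kappaT p0 p1 p2 = 0)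
    (φ : (Fin 3 → Bool) → ℝ) :
    ∑ ω, configWeight ![p0, p1, p2] ω * φ (triangleLinks ω) =
      ∑ ω, configWeight ![1 - p0, 1 - p1, 1 - p2] ω * φ (starLinks ω) := by
  simp only [sum_fin_succ_pi, Fintype.sum_unique, Fintype.sum_bool, configWeight, triangleLinks,
    starLinks, Fin.prod_univ_three, Matrix.cons_val, Bool.or_false, Bool.or_true, Bool.false_or,
    Bool.true_or, Bool.and_true, Bool.and_false, Bool.true_and, Bool.false_and, ↓reduceIte,
    Bool.false_eq_true]
  rw [kappaT] at hκ
  -- grouped by link pattern, the two sides differ by `κ_△ · (φ all - φ none)`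
  linear_combination (φ ![true, true, true] - φ ![false, false, false]) * hκ

theorem triangleConn_iff (ω : Fin 3 → Bool) (x y : Fin 3) :
    triangleConn ω x y ↔ x = y ∨ triangleLinks ω (-(x + y)) = true := by
  constructor
  · intro h
    induction h with
    | refl => exact .inl rfl
    | tail _ hstep ih =>
      have closed : ∀ (ω : Fin 3 → Bool) (x y z : Fin 3),
          (x = y ∨ triangleLinks ω (-(x + y)) = true) → y ≠ z ∧ ω (-(y + z)) = true →
            x = z ∨ triangleLinks ω (-(x + z)) = true := by decide
      exact closed ω _ _ _ ih hstep
  · have path : ∀ (ω : Fin 3 → Bool) (x y : Fin 3), triangleLinks ω (-(x + y)) = true →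
        x = y ∨ (x ≠ y ∧ ω (-(x + y)) = true) ∨
          ((x ≠ -(x + y) ∧ ω (-(x + -(x + y))) = true) ∧
            (-(x + y) ≠ y ∧ ω (-(-(x + y) + y)) = true)) := by decide
    rintro (rfl | hlink)
    · exact .refl
    rcases path ω x y hlink with rfl | hedge | ⟨hxz, hzy⟩
    · exact .refl
    · exact .single hedge
    · exact .head hxz (.single hzy)

def centreCluster (ω : Fin 3 → Bool) : Fin 4 → Bool := Fin.snoc ω true

theorem eq_or_centreCluster_of_starConn {ω : Fin 3 → Bool} {u v : Fin 4} (h : starConn ω u v) :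
    u = v ∨ (centreCluster ω u = true ∧ centreCluster ω v = true) := by
  induction h with
  | refl => exact .inl rfl
  | tail _ hstep ih =>
    have closed : ∀ (ω : Fin 3 → Bool) (u v w : Fin 4),
        (u = v ∨ (centreCluster ω u = true ∧ centreCluster ω v = true)) → starAdj ω v w →
          u = w ∨ (centreCluster ω u = true ∧ centreCluster ω w = true) := by
      unfold starAdj centreCluster; decide
    exact closed ω _ _ _ ih hstep

theorem starConn_castSucc_iff (ω : Fin 3 → Bool) (x y : Fin 3) :
    starConn ω x.castSucc y.castSucc ↔ x = y ∨ starLinks ω (-(x + y)) = true := by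
  constructor
  · have spokes : ∀ (ω : Fin 3 → Bool) (x y : Fin 3), (x.castSucc = y.castSucc ∨
        (centreCluster ω x.castSucc = true ∧ centreCluster ω y.castSucc = true)) →
          x = y ∨ starLinks ω (-(x + y)) = true := by
      unfold centreCluster; decide
    exact fun h => spokes ω x y (eq_or_centreCluster_of_starConn h)
  · have spokes : ∀ (ω : Fin 3 → Bool) (x y : Fin 3), starLinks ω (-(x + y)) = true →
        x = y ∨ ω x = true ∧ ω y = true := by decide
    rintro (rfl | hlink)
    · exact .refl
    rcases spokes ω x y hlink with rfl | ⟨hx, hy⟩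
    · exact .refl
    · exact .head ⟨x, hx, .inl ⟨rfl, rfl⟩⟩ (.single ⟨y, hy, .inr ⟨rfl, rfl⟩⟩)

/-- **star–triangle coupling.** If `κ_△(p0,p1,p2) = 0` with
`p ∈ [0,1)³`, there is a coupling `μ` of the triangle measure (edge probabilities
`p0, p1, p2`) and the star measure (spoke probabilities `1-p0, 1-p1, 1-p2`) under
which, almost surely, any two of `A`, `B`, `C` are connected in the triangle
configuration if and only if they are connected in the star configuration. -/
theorem star_triangle_coupling (p0 p1 p2 : ℝ)
    (h0 : p0 ∈ Set.Ico (0 : ℝ) 1) (h1 : p1 ∈ Set.Ico (0 : ℝ) 1)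
    (h2 : p2 ∈ Set.Ico (0 : ℝ) 1) (hκ : kappaT p0 p1 p2 = 0) :
    ∃ μ : Measure ((Fin 3 → Bool) × (Fin 3 → Bool)),
      IsProbabilityMeasure μ ∧
      μ.map Prod.fst = threeEdgeMeasure ![p0, p1, p2] ∧
      μ.map Prod.snd = threeEdgeMeasure ![1 - p0, 1 - p1, 1 - p2] ∧
      μ {σ | ∀ x y : Fin 3,
          triangleConn σ.1 x y ↔ starConn σ.2 (Fin.castSucc x) (Fin.castSucc y)} = 1 := by
  have hp : ∀ i, ![p0, p1, p2] i ∈ Icc (0 : ℝ) 1 := by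
    simp [Fin.forall_fin_succ, h0.1, h0.2.le, h1.1, h1.2.le, h2.1, h2.2.le]
  have hq : ∀ i, ![1 - p0, 1 - p1, 1 - p2] i ∈ Icc (0 : ℝ) 1 := by
    simp [Fin.forall_fin_succ, h0.1, h0.2.le, h1.1, h1.2.le, h2.1, h2.2.le]
  obtain ⟨μ, hμ, hfst, hsnd, hlinks⟩ :=
    exists_coupling_of_law_eq (configWeight_nonneg hp) (configWeight_nonneg hq)
      (sum_configWeight _) (sum_configWeight_triangleLinks_eq_starLinks hκ)
  refine ⟨μ, hμ, hfst, hsnd, le_antisymm prob_le_one (hlinks ▸ measure_mono ?_)⟩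
  intro σ (hσ : triangleLinks σ.1 = starLinks σ.2) x y
  rw [triangleConn_iff, starConn_castSucc_iff, hσ]

end Perc
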